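/- Let f : ℝⁿ → ℝ be twice continuously differentiable at θ with vanishing gradient at θ, and let H be the (symmetric) Hessian matrix of f at θ, with orthonormal eigenbasis u₁, …, uₙ and eigenvalues λ₁ ≥ … ≥ λₙ in non-increasing order. Fix 0 ≤ r < n and let S be the linear subspace of ℝⁿ spanned by u_{r+1}, …, uₙ. Then for updates constrained to the low-rank subspace S, the forgetting satisfies f(θ + Δ) − f(θ) ≤ (1/2)·λ_{r+1}·‖Δ‖² + o(‖Δ‖²) as Δ → 0 within S; precisely, the function Δ ↦ max(f(θ + Δ) − f(θ) − (1/2)·λ_{r+1}·‖Δ‖², 0), restricted to Δ ∈ S, is little-o of ‖Δ‖² at 0 along S. -/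

import Mathlib

open Filter Asymptotics Topology Matrix RealInnerProductSpace

theorem taylor2_isLittleO {E : Type*} [NormedAddCommGroup E] [NormedSpace ℝ E]
    {f : E → ℝ} {x : E} (hf : ContDiffAt ℝ 2 f x) :
    (fun h : E => f (x + h) - f x - fderiv ℝ f x h
        - (1 / 2 : ℝ) * (fderiv ℝ (fderiv ℝ f) x h h)) =o[𝓝 (0 : E)] fun h => ‖h‖ ^ 2 := by
  set f'' := fderiv ℝ (fderiv ℝ f) x with hf''def
  have h1 : ContDiffAt ℝ 1 (fderiv ℝ f) x := hf.fderiv_right (by norm_num)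
  have hf'' : HasFDerivAt (fderiv ℝ f) f'' x := (h1.differentiableAt (by norm_num)).hasFDerivAt
  obtain ⟨s, hs, hcd⟩ := hf.contDiffOn le_rfl (by norm_num)
  obtain ⟨ε, εpos, hball⟩ := Metric.mem_nhds_iff.1 hs
  have hdiffb : ∀ y ∈ Metric.ball x ε, HasFDerivAt f (fderiv ℝ f y) y := by
    intro y hy
    have : DifferentiableOn ℝ f s := hcd.differentiableOn (by norm_num)
    exact ((this y (hball hy)).differentiableAt
      (Filter.mem_of_superset (Metric.isOpen_ball.mem_nhds hy) hball)).hasFDerivAt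
  have hsymm : ∀ v w, f'' v w = f'' w v :=
    second_derivative_symmetric_of_eventually
      (Filter.eventually_of_mem (Metric.ball_mem_nhds x εpos) hdiffb) hf''
  rw [isLittleO_iff]
  intro c hc
  have hlo := (hasFDerivAt_iff_isLittleO_nhds_zero.1 hf'')
  rw [isLittleO_iff] at hlo
  obtain ⟨δ1, δ1pos, hδ1⟩ := Metric.eventually_nhds_iff_ball.1 (hlo hc)
  set δ := min δ1 ε with hδ
  have δpos : 0 < δ := lt_min δ1pos εpos
  filter_upwards [Metric.ball_mem_nhds (0 : E) δpos] with h hh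
  simp only [Metric.mem_ball, dist_zero_right] at hh
  set g : E → ℝ := fun y => f (x + y) - f x - fderiv ℝ f x y - (1 / 2 : ℝ) * (f'' y y) with hg
  set D : E → E →L[ℝ] ℝ := fun y => fderiv ℝ f (x + y) - fderiv ℝ f x - f'' y with hD
  have hder : ∀ y ∈ Metric.closedBall (0 : E) ‖h‖,
      HasFDerivWithinAt g (D y) (Metric.closedBall (0 : E) ‖h‖) y := by
    intro y hy
    simp only [Metric.mem_closedBall, dist_zero_right] at hy
    have hxy : x + y ∈ Metric.ball x ε := by
      simp only [Metric.mem_ball, dist_self_add_left]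
      exact lt_of_le_of_lt hy (lt_of_lt_of_le hh (min_le_right _ _))
    have h0 : HasFDerivAt (fun y : E => f (x + y)) (fderiv ℝ f (x + y)) y := by
      have := (hdiffb (x + y) hxy).comp y ((hasFDerivAt_id y).const_add x)
      simpa [Function.comp_def] using this
    have h1' : HasFDerivAt (fun y : E => fderiv ℝ f x y) (fderiv ℝ f x) y :=
      (fderiv ℝ f x).hasFDerivAt
    have h2 : HasFDerivAt (fun y : E => f'' y y)
        ((f'' y).comp (ContinuousLinearMap.id ℝ E) + f''.flip y) y :=
      (f''.hasFDerivAt).clm_apply (hasFDerivAt_id y)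
    have h3 : HasFDerivAt g (fderiv ℝ f (x + y) - 0 - fderiv ℝ f x
        - (1 / 2 : ℝ) • ((f'' y).comp (ContinuousLinearMap.id ℝ E) + f''.flip y)) y :=
      (((h0.sub (hasFDerivAt_const (f x) y)).sub h1').sub (h2.const_smul (1 / 2 : ℝ)))
    have heq : (fderiv ℝ f (x + y) - 0 - fderiv ℝ f x
        - (1 / 2 : ℝ) • ((f'' y).comp (ContinuousLinearMap.id ℝ E) + f''.flip y)) = D y := by
      ext k
      simp only [hD, ContinuousLinearMap.sub_apply, ContinuousLinearMap.zero_apply,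
        ContinuousLinearMap.smul_apply, ContinuousLinearMap.add_apply,
        ContinuousLinearMap.coe_comp', Function.comp_apply, ContinuousLinearMap.coe_id',
        id_eq, ContinuousLinearMap.flip_apply, smul_eq_mul]
      rw [hsymm k y]
      ring
    exact (heq ▸ h3).hasFDerivWithinAt
  have hbound : ∀ y ∈ Metric.closedBall (0 : E) ‖h‖, ‖D y‖ ≤ c * ‖h‖ := by
    intro y hy
    simp only [Metric.mem_closedBall, dist_zero_right] at hy
    have hyδ : y ∈ Metric.ball (0 : E) δ1 := by
      simp only [Metric.mem_ball, dist_zero_right]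
      exact lt_of_le_of_lt hy (lt_of_lt_of_le hh (min_le_left _ _))
    have := hδ1 y hyδ
    simp only [hD]
    calc ‖fderiv ℝ f (x + y) - fderiv ℝ f x - f'' y‖ ≤ c * ‖y‖ := by simpa using this
      _ ≤ c * ‖h‖ := by gcongr
  have hmvt := (convex_closedBall (0 : E) ‖h‖).norm_image_sub_le_of_norm_hasFDerivWithin_le
    hder hbound (Metric.mem_closedBall_self (norm_nonneg h))
    (by simp [Metric.mem_closedBall, norm_nonneg h] : h ∈ Metric.closedBall (0 : E) ‖h‖)
  have hg0 : g 0 = 0 := by simp [hg]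
  have : ‖g h‖ ≤ c * ‖h‖ * ‖h‖ := by simpa [hg0] using hmvt
  calc ‖g h‖ ≤ c * ‖h‖ * ‖h‖ := this
    _ = c * ‖‖h‖ ^ 2‖ := by rw [Real.norm_of_nonneg (by positivity)]; ring

/-- **Low-rank (fixed-rank projection) forgetting bound.** With `f` C² at `θ`, vanishing
gradient, symmetric Hessian matrix `H` with orthonormal eigenbasis `u` and non-increasing
eigenvalues `lam`, and `S` the span of the eigenvectors `u r, …, u (n-1)` (i.e.
`u_{r+1}, …, u_n`), updates constrained to `S` satisfy
`f (θ + Δ) - f θ ≤ (1/2) λ_{r+1} ‖Δ‖² + o(‖Δ‖²)` as `Δ → 0` along `S`; precisely,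
`Δ ↦ max (f (θ + Δ) - f θ - (1/2) λ_{r+1} ‖Δ‖²) 0` is `o(‖Δ‖²)` along `𝓝[S] 0`. -/
theorem stmt_14 {n : ℕ} (f : EuclideanSpace ℝ (Fin n) → ℝ)
    (θ : EuclideanSpace ℝ (Fin n)) (hf : ContDiffAt ℝ 2 f θ)
    (hgrad : fderiv ℝ f θ = 0)
    (H : Matrix (Fin n) (Fin n) ℝ) (hH : H.IsSymm)
    (hHess : ∀ v w : EuclideanSpace ℝ (Fin n),
      iteratedFDeriv ℝ 2 f θ ![v, w] = ⟪v, Matrix.toEuclideanLin H w⟫)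
    (lam : Fin n → ℝ) (u : Fin n → EuclideanSpace ℝ (Fin n))
    (horth : ∀ i j, ⟪u i, u j⟫ = if i = j then (1 : ℝ) else 0)
    (heig : ∀ i, Matrix.toEuclideanLin H (u i) = lam i • u i)
    (hsort : ∀ i j : Fin n, i ≤ j → lam j ≤ lam i)
    (r : ℕ) (hr : r < n) :
    (fun Δ : EuclideanSpace ℝ (Fin n) =>
        max (f (θ + Δ) - f θ - (1 / 2) * lam ⟨r, hr⟩ * ‖Δ‖ ^ 2) 0)
      =o[𝓝[(Submodule.span ℝ (u '' {i : Fin n | r ≤ (i : ℕ)}) :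
            Submodule ℝ (EuclideanSpace ℝ (Fin n)))]
          (0 : EuclideanSpace ℝ (Fin n))] (fun Δ => ‖Δ‖ ^ 2) := by
  classical
  set T := Matrix.toEuclideanLin H with hT
  have hon : Orthonormal ℝ u := orthonormal_iff_ite.mpr horth
  haveI : Nonempty (Fin n) := ⟨⟨r, hr⟩⟩
  set b := basisOfOrthonormalOfCardEqFinrank hon
    (by simp [finrank_euclideanSpace_fin]) with hbdef
  have hb : ∀ i, b i = u i := fun i =>
    congrFun (coe_basisOfOrthonormalOfCardEqFinrank hon _) i
  have key : ∀ Δ ∈ Submodule.span ℝ (u '' {i : Fin n | r ≤ (i : ℕ)}),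
      ⟪Δ, T Δ⟫ ≤ lam ⟨r, hr⟩ * ‖Δ‖ ^ 2 := by
    intro Δ hΔ
    set c : Fin n → ℝ := fun i => b.repr Δ i with hcdef
    have hrepr : Δ = ∑ i, c i • u i := by
      conv_lhs => rw [← b.sum_repr Δ]
      exact Finset.sum_congr rfl fun i _ => by rw [hb]
    have hci : ∀ i, ⟪u i, Δ⟫ = c i := by
      intro i
      conv_lhs => rw [hrepr]
      rw [inner_sum]
      simp only [real_inner_smul_right, horth, mul_ite, mul_one, mul_zero]
      simp
    have hzero : ∀ i : Fin n, (i : ℕ) < r → c i = 0 := by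
      intro i hi
      have hmem : ⟪u i, Δ⟫ = 0 := by
        refine Submodule.span_induction ?_ ?_ ?_ ?_ hΔ
        · rintro v ⟨j, hj, rfl⟩
          simp only [Set.mem_setOf_eq] at hj
          rw [horth]
          exact if_neg (by rintro rfl; omega)
        · simp
        · intro a b _ _ ha hb; rw [inner_add_right, ha, hb, add_zero]
        · intro t a _ ha; rw [real_inner_smul_right, ha, mul_zero]
      rw [← hci i]; exact hmem
    have hexp : ∀ d : Fin n → ℝ, ⟪Δ, ∑ j, d j • u j⟫ = ∑ j, d j * c j := by
      intro d
      rw [inner_sum]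
      refine Finset.sum_congr rfl fun j _ => ?_
      rw [real_inner_smul_right, real_inner_comm, hci]
    have hTΔ : T Δ = ∑ j, (lam j * c j) • u j := by
      conv_lhs => rw [hrepr]
      rw [map_sum]
      refine Finset.sum_congr rfl fun j _ => ?_
      rw [LinearMap.map_smul, heig, smul_smul, mul_comm]
    have hsq : ‖Δ‖ ^ 2 = ∑ j, c j * c j := by
      have h1 := hexp c
      rw [← hrepr] at h1
      rw [← real_inner_self_eq_norm_sq, h1]
    have hQ : ⟪Δ, T Δ⟫ = ∑ j, lam j * c j * c j := by
      rw [hTΔ, hexp]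
    rw [hQ, hsq, Finset.mul_sum]
    refine Finset.sum_le_sum fun j _ => ?_
    rcases lt_or_ge ((j : ℕ)) r with hj | hj
    · rw [hzero j hj]; simp
    · have hle : lam j ≤ lam ⟨r, hr⟩ := hsort ⟨r, hr⟩ j (by simpa [Fin.le_def] using hj)
      nlinarith [mul_self_nonneg (c j)]
  have h2app : ∀ v w : EuclideanSpace ℝ (Fin n),
      fderiv ℝ (fderiv ℝ f) θ v w = ⟪v, T w⟫ := by
    intro v w
    have h := hHess v w
    rw [iteratedFDeriv_two_apply] at h
    simpa using h
  refine IsBigO.trans_isLittleO ?_ ((taylor2_isLittleO hf).mono nhdsWithin_le_nhds)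
  rw [isBigO_iff]
  refine ⟨1, ?_⟩
  filter_upwards [self_mem_nhdsWithin] with Δ hΔ
  rw [one_mul]
  have hQ : fderiv ℝ (fderiv ℝ f) θ Δ Δ ≤ lam ⟨r, hr⟩ * ‖Δ‖ ^ 2 := by
    rw [h2app]; exact key Δ hΔ
  have hgrad0 : fderiv ℝ f θ Δ = 0 := by rw [hgrad]; rfl
  set a := f (θ + Δ) - f θ - 1 / 2 * lam ⟨r, hr⟩ * ‖Δ‖ ^ 2 with ha
  set e := f (θ + Δ) - f θ - fderiv ℝ f θ Δ
      - (1 / 2 : ℝ) * (fderiv ℝ (fderiv ℝ f) θ Δ Δ) with he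
  have hae : a ≤ e := by
    rw [ha, he, hgrad0]
    nlinarith [hQ]
  rw [Real.norm_of_nonneg (le_max_right _ _)]
  exact max_le (le_trans hae (le_abs_self e)) (abs_nonneg e)
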